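/- arXiv:2408.15381 — 8 statements merged into one kernel-verified Lean document; each statement's English description precedes it below -/
import Mathlib

section
/- Let S and U be finite nonempty sets, let Q : S → U → ℝ, and let M ⊆ U be a nonempty set such that for every s ∈ S, M equals the set of maximizers of Q s, i.e., M = {u ∈ U : ∀ u' ∈ U, Q s u' ≤ Q s u}. Let p : S → ℝ be a probability weight function with p s > 0 for every s ∈ S. Then the set of maximizers of the marginalized function u ↦ ∑_{s ∈ S} p s * Q s u is exactly M. -/
/-- If the argmax set over actions is the same for every state, it is preserved
under marginalization over states with a full-support belief. -/
theorem stmt1 {S U : Type*} [Fintype S] [Fintype U] [Nonempty S] [Nonempty U]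
    (Q : S → U → ℝ) (M : Set U) (hMne : M.Nonempty)
    (hMeq : ∀ s, M = {u : U | ∀ u', Q s u' ≤ Q s u})
    (p : S → ℝ) (hp0 : ∀ s, 0 < p s) (hp1 : ∑ s, p s = 1) :
    {u : U | ∀ u', ∑ s, p s * Q s u' ≤ ∑ s, p s * Q s u} = M := by
  obtain ⟨m, hm⟩ := hMne
  ext u
  constructor
  · intro hu
    by_contra hnM
    -- u is not a maximizer for some state s₀
    have h1 : ∀ s, Q s u ≤ Q s m := fun s => by
      have := (hMeq s) ▸ hm; exact this u
    have h2 : ∃ s₀, Q s₀ u < Q s₀ m := by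
      by_contra h
      push_neg at h
      apply hnM
      rw [hMeq (Classical.arbitrary S)]
      -- need: ∀ u', Q s u' ≤ Q s u for that s; use h and m maximizer
      intro u'
      have hm' := (hMeq (Classical.arbitrary S)) ▸ hm
      exact le_trans (hm' u') (h _)
    obtain ⟨s₀, hs₀⟩ := h2
    have : ∑ s, p s * Q s u < ∑ s, p s * Q s m := by
      apply Finset.sum_lt_sum
      · intro s _
        exact mul_le_mul_of_nonneg_left (h1 s) (hp0 s).le
      · exact ⟨s₀, Finset.mem_univ _, (mul_lt_mul_iff_right₀ (hp0 s₀)).mpr hs₀⟩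
    exact absurd (hu m) (not_le.mpr this)
  · intro hu u'
    apply Finset.sum_le_sum
    intro s _
    have := (hMeq s) ▸ hu
    exact mul_le_mul_of_nonneg_left (this u') (hp0 s).le
end

section
/- Let n ≥ 1, let U_1, …, U_n be finite nonempty sets, let Q_i : U_i → ℝ for each i, and let f : (Fin n → ℝ) → ℝ be monotone with respect to the pointwise order on Fin n → ℝ. Then the maximum over joint actions u ∈ ∏_i U_i of f(λ i, Q_i(u_i)) equals f(λ i, max_{v ∈ U_i} Q_i(v)), and any joint action u* whose components u*_i each maximize Q_i is a maximizer of u ↦ f(λ i, Q_i(u_i)). -/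
/-- QMIX monotonic mixing: the max of the mixed value is the mix of the individual
maxima, and any joint action composed of individual maximizers is a joint maximizer. -/
theorem stmt2 {n : ℕ} (hn : 1 ≤ n) (U : Fin n → Type*)
    [∀ i, Fintype (U i)] [∀ i, Nonempty (U i)]
    (Q : ∀ i, U i → ℝ) (f : (Fin n → ℝ) → ℝ) (hf : Monotone f) :
    (Finset.univ.sup' Finset.univ_nonempty
        (fun u : ∀ i, U i => f (fun i => Q i (u i)))
      = f (fun i => Finset.univ.sup' Finset.univ_nonempty (Q i))) ∧
    ∀ ustar : ∀ i, U i, (∀ i v, Q i v ≤ Q i (ustar i)) →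
      ∀ u : ∀ i, U i, f (fun i => Q i (u i)) ≤ f (fun i => Q i (ustar i)) := by
  constructor
  · apply le_antisymm
    · apply Finset.sup'_le
      intro u _
      apply hf
      intro i
      exact Finset.le_sup' (Q i) (Finset.mem_univ (u i))
    · -- choose a maximizer for each i
      have h : ∀ i, ∃ v : U i, Finset.univ.sup' Finset.univ_nonempty (Q i) = Q i v := by
        intro i
        obtain ⟨v, _, hv⟩ := Finset.exists_mem_eq_sup' Finset.univ_nonempty (Q i)
        exact ⟨v, hv⟩
      choose u hu using h
      calc f (fun i => Finset.univ.sup' Finset.univ_nonempty (Q i))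
          = f (fun i => Q i (u i)) := by simp only [hu]
        _ ≤ _ := Finset.le_sup' (fun u : ∀ i, U i => f fun i => Q i (u i)) (Finset.mem_univ u)
  · intro ustar hstar u
    exact hf fun i => hstar i (u i)
end

section
/- Let n ≥ 1, let U_1, …, U_n be finite nonempty sets, let Q_i : U_i → ℝ for each i, and let f : (Fin n → ℝ) → ℝ be strictly monotone in each coordinate, meaning: f is monotone for the pointwise order, and whenever x ≤ y pointwise with x_i < y_i for some i, then f x < f y. Then a joint action u ∈ ∏_i U_i maximizes u ↦ f(λ i, Q_i(u_i)) if and only if for every i, u_i maximizes Q_i over U_i. In particular, the set of joint maximizers is exactly the product of the sets of individual maximizers, i.e., the Individual-Global-Max (IGM) condition holds. -/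
/-- A strictly monotone mixing of per-agent utilities satisfies IGM: a joint action
maximizes the mixed value iff each component maximizes its individual utility;
in particular the joint maximizer set is the product of the individual ones. -/
theorem stmt3 {n : ℕ} (hn : 1 ≤ n) (U : Fin n → Type*)
    [∀ i, Fintype (U i)] [∀ i, Nonempty (U i)]
    (Q : ∀ i, U i → ℝ) (f : (Fin n → ℝ) → ℝ)
    (hmono : Monotone f)
    (hstrict : ∀ x y : Fin n → ℝ, x ≤ y → (∃ i, x i < y i) → f x < f y) :
    (∀ u : ∀ i, U i,
        (∀ u' : ∀ i, U i, f (fun i => Q i (u' i)) ≤ f (fun i => Q i (u i)))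
          ↔ ∀ i, ∀ v, Q i v ≤ Q i (u i)) ∧
    ({u : ∀ i, U i |
        ∀ u' : ∀ i, U i, f (fun i => Q i (u' i)) ≤ f (fun i => Q i (u i))}
      = Set.pi Set.univ (fun i => {v : U i | ∀ v', Q i v' ≤ Q i v})) := by
  have main : ∀ u : ∀ i, U i,
      (∀ u' : ∀ i, U i, f (fun i => Q i (u' i)) ≤ f (fun i => Q i (u i)))
        ↔ ∀ i, ∀ v, Q i v ≤ Q i (u i) := by
    intro u
    constructor
    · intro h i v
      by_contra hlt
      push_neg at hlt
      have h1 : f (fun j => Q j (u j)) < f (fun j => Q j (Function.update u i v j)) := by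
        apply hstrict
        · intro j
          by_cases hj : j = i
          · subst hj; simp [Function.update_self]; exact hlt.le
          · simp [Function.update_of_ne hj]
        · exact ⟨i, by simp [Function.update_self, hlt]⟩
      exact absurd (h (Function.update u i v)) (not_le.mpr h1)
    · intro h u'
      exact hmono fun i => h i (u' i)
  refine ⟨main, ?_⟩
  ext u
  simp only [Set.mem_setOf_eq, Set.mem_pi, Set.mem_univ, forall_true_left]
  exact main u
end

section
/- Let S be a finite nonempty set of states, n ≥ 1, U_1, …, U_n finite nonempty sets with product U = ∏_i U_i. For each i, let V_i ∈ ℝ, let A_i : U_i → ℝ with A_i ≤ 0 and nonempty zero set M_i = {v : A_i(v) = 0}, and let w_i : S → ℝ with w_i(s) > 0, b_i : S → ℝ, and λ_i : S × U → ℝ with λ_i(s, u) > 0. Define Q(s, u) = ∑_i (w_i(s) · V_i + b_i(s)) + ∑_i λ_i(s, u) · w_i(s) · A_i(u_i). Then: (i) for every s ∈ S, the set of maximizers of u ↦ Q(s, u) equals ∏_i M_i (independent of s); and (ii) for every probability weight function p : S → ℝ with p s > 0 for all s, the set of maximizers of u ↦ ∑_s p s * Q(s, u) also equals ∏_i M_i.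 -/
/-- Stateful QPLEX introduces no state-induced bias: for every state the maximizer
set of the mixed value is the product of the individual greedy sets, and the same
holds after marginalizing over any full-support belief. -/
theorem stmt9 {S : Type*} [Fintype S] [Nonempty S] {n : ℕ} (hn : 1 ≤ n)
    (U : Fin n → Type*) [∀ i, Fintype (U i)] [∀ i, Nonempty (U i)]
    (V : Fin n → ℝ)
    (A : ∀ i, U i → ℝ) (hA : ∀ i v, A i v ≤ 0)
    (M : ∀ i, Set (U i)) (hM : ∀ i, M i = {v : U i | A i v = 0})
    (hMne : ∀ i, (M i).Nonempty)
    (w : Fin n → S → ℝ) (hw : ∀ i s, 0 < w i s)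
    (b : Fin n → S → ℝ)
    (lam : Fin n → S → (∀ j, U j) → ℝ) (hlam : ∀ i s u, 0 < lam i s u)
    (Q : S → (∀ j, U j) → ℝ)
    (hQ : ∀ s u, Q s u = ∑ i, (w i s * V i + b i s)
                          + ∑ i, lam i s u * (w i s * A i (u i))) :
    (∀ s, {u : ∀ j, U j | ∀ u', Q s u' ≤ Q s u} = Set.pi Set.univ M) ∧
    (∀ p : S → ℝ, (∀ s, 0 < p s) → ∑ s, p s = 1 →
      {u : ∀ j, U j | ∀ u', ∑ s, p s * Q s u' ≤ ∑ s, p s * Q s u}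
        = Set.pi Set.univ M) := by
  -- greedy joint action
  choose u0 hu0 using hMne
  have hA0 : ∀ i, A i (u0 i) = 0 := by
    intro i; have := hu0 i; rw [hM i] at this; exact this
  set C : S → ℝ := fun s => ∑ i, (w i s * V i + b i s) with hC
  have hterm : ∀ s u i, lam i s u * (w i s * A i (u i)) ≤ 0 := fun s u i =>
    mul_nonpos_of_nonneg_of_nonpos (hlam i s u).le
      (mul_nonpos_of_nonneg_of_nonpos (hw i s).le (hA i (u i)))
  have hQle : ∀ s u, Q s u ≤ C s := by
    intro s u
    rw [hQ]
    have : ∑ i, lam i s u * (w i s * A i (u i)) ≤ 0 :=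
      Finset.sum_nonpos fun i _ => hterm s u i
    linarith
  have hQ0 : ∀ s, Q s u0 = C s := by
    intro s
    rw [hQ]
    have : ∑ i, lam i s u0 * (w i s * A i (u0 i)) = 0 := by
      apply Finset.sum_eq_zero
      intro i _
      rw [hA0 i]; ring
    rw [this, add_zero]
  -- if Q s u = C s then u ∈ pi M
  have hmem : ∀ s u, Q s u = C s → ∀ i, A i (u i) = 0 := by
    intro s u hQu i
    have hsum : ∑ i, lam i s u * (w i s * A i (u i)) = 0 := by
      have := hQ s u; rw [hQu] at this; linarith
    have h0 : lam i s u * (w i s * A i (u i)) = 0 :=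
      (Finset.sum_eq_zero_iff_of_nonpos fun j _ => hterm s u j).mp hsum i
        (Finset.mem_univ i)
    have h1 : w i s * A i (u i) = 0 := by
      rcases mul_eq_zero.mp h0 with h | h
      · exact absurd h (hlam i s u).ne'
      · exact h
    rcases mul_eq_zero.mp h1 with h | h
    · exact absurd h (hw i s).ne'
    · exact h
  have hmemQ : ∀ u, (∀ i, A i (u i) = 0) → ∀ s, Q s u = C s := by
    intro u hu s
    rw [hQ]
    have : ∑ i, lam i s u * (w i s * A i (u i)) = 0 := by
      apply Finset.sum_eq_zero; intro i _; rw [hu i]; ring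
    rw [this, add_zero]
  constructor
  · intro s
    ext u
    simp only [Set.mem_setOf_eq, Set.mem_pi, Set.mem_univ, forall_true_left]
    constructor
    · intro h i
      rw [hM i]
      have hle := hQle s u
      have hge := h u0
      rw [hQ0 s] at hge
      exact hmem s u (le_antisymm hle hge) i
    · intro h u'
      have : ∀ i, A i (u i) = 0 := by
        intro i; have := h i; rwa [hM i] at this
      rw [hmemQ u this s]
      exact hQle s u'
  · intro p hp hp1
    ext u
    simp only [Set.mem_setOf_eq, Set.mem_pi, Set.mem_univ, forall_true_left]
    have hCle : ∀ u', ∑ s, p s * Q s u' ≤ ∑ s, p s * C s := fun u' =>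
      Finset.sum_le_sum fun s _ =>
        mul_le_mul_of_nonneg_left (hQle s u') (hp s).le
    constructor
    · intro h i
      rw [hM i]
      have hge : ∑ s, p s * C s ≤ ∑ s, p s * Q s u := by
        have := h u0
        calc ∑ s, p s * C s = ∑ s, p s * Q s u0 := by
              apply Finset.sum_congr rfl; intro s _; rw [hQ0 s]
          _ ≤ _ := h u0
      have heq : ∑ s, p s * Q s u = ∑ s, p s * C s :=
        le_antisymm (hCle u) hge
      obtain ⟨s⟩ : Nonempty S := inferInstance
      have hseq : p s * Q s u = p s * C s := by
        have h' : ∀ t ∈ Finset.univ, p t * Q t u ≤ p t * C t := fun t _ =>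
          mul_le_mul_of_nonneg_left (hQle t u) (hp t).le
        by_contra hne
        have hlt : p s * Q s u < p s * C s := lt_of_le_of_ne (h' s (Finset.mem_univ s)) hne
        have : ∑ t, p t * Q t u < ∑ t, p t * C t :=
          Finset.sum_lt_sum h' ⟨s, Finset.mem_univ s, hlt⟩
        linarith [heq]
      have : Q s u = C s := by
        have := mul_left_cancel₀ (hp s).ne' hseq
        exact this
      exact hmem s u this i
    · intro h u'
      have hAu : ∀ i, A i (u i) = 0 := by
        intro i; have := h i; rwa [hM i] at this
      calc ∑ s, p s * Q s u' ≤ ∑ s, p s * C s := hCle u'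
        _ = ∑ s, p s * Q s u := by
            apply Finset.sum_congr rfl; intro s _; rw [hmemQ u hAu s]
end

section
/- Let S be a finite nonempty set of states, n ≥ 1, U_1, …, U_n finite nonempty sets with product U = ∏_i U_i. For each i, let A_i : U_i → ℝ with A_i ≤ 0 and nonempty zero set M_i = {v : A_i(v) = 0}, let w_i : S → ℝ with w_i(s) > 0, and let λ_i : S × U → ℝ with λ_i(s, u) > 0. Let V : S → ℝ be an arbitrary function of the state. Define Q(s, u) = V(s) + ∑_i λ_i(s, u) · w_i(s) · A_i(u_i). Then: (i) for every s ∈ S, the set of maximizers of u ↦ Q(s, u) equals ∏_i M_i (independent of s); and (ii) for every probability weight function p : S → ℝ with p s > 0 for all s, the set of maximizers of u ↦ ∑_s p s * Q(s, u) also equals ∏_i M_i. -/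
/-- Stateful DuelMIX introduces no state-induced bias: for every state the maximizer
set of Q(s, ·) = V(s) + ∑ᵢ λᵢ(s,u) wᵢ(s) Aᵢ(uᵢ) is the product of the individual
greedy sets, and the same holds after marginalizing over any full-support belief. -/
theorem stmt10 {S : Type*} [Fintype S] [Nonempty S] {n : ℕ} (hn : 1 ≤ n)
    (U : Fin n → Type*) [∀ i, Fintype (U i)] [∀ i, Nonempty (U i)]
    (A : ∀ i, U i → ℝ) (hA : ∀ i v, A i v ≤ 0)
    (M : ∀ i, Set (U i)) (hM : ∀ i, M i = {v : U i | A i v = 0})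
    (hMne : ∀ i, (M i).Nonempty)
    (w : Fin n → S → ℝ) (hw : ∀ i s, 0 < w i s)
    (lam : Fin n → S → (∀ j, U j) → ℝ) (hlam : ∀ i s u, 0 < lam i s u)
    (V : S → ℝ)
    (Q : S → (∀ j, U j) → ℝ)
    (hQ : ∀ s u, Q s u = V s + ∑ i, lam i s u * (w i s * A i (u i))) :
    (∀ s, {u : ∀ j, U j | ∀ u', Q s u' ≤ Q s u} = Set.pi Set.univ M) ∧
    (∀ p : S → ℝ, (∀ s, 0 < p s) → ∑ s, p s = 1 →
      {u : ∀ j, U j | ∀ u', ∑ s, p s * Q s u' ≤ ∑ s, p s * Q s u}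
        = Set.pi Set.univ M) := by
  classical
  obtain ⟨u0, hu0⟩ : ∃ u0 : ∀ j, U j, ∀ i, A i (u0 i) = 0 := by
    choose f hf using hMne
    refine ⟨f, fun i => ?_⟩
    have := hf i; rw [hM i] at this; exact this
  have hterm : ∀ s u (i : Fin n), lam i s u * (w i s * A i (u i)) ≤ 0 := fun s u i =>
    mul_nonpos_of_nonneg_of_nonpos (hlam i s u).le
      (mul_nonpos_of_nonneg_of_nonpos (hw i s).le (hA i (u i)))
  have hle : ∀ s u, Q s u ≤ V s := by
    intro s u; rw [hQ]
    have : ∑ i, lam i s u * (w i s * A i (u i)) ≤ 0 :=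
      Finset.sum_nonpos fun i _ => hterm s u i
    linarith
  have heq : ∀ s u, Q s u = V s ↔ ∀ i, A i (u i) = 0 := by
    intro s u
    rw [hQ]
    constructor
    · intro h i
      have hsum : ∑ i, lam i s u * (w i s * A i (u i)) = 0 := by linarith
      have h0 := (Finset.sum_eq_zero_iff_of_nonpos (fun i _ => hterm s u i)).mp hsum i
        (Finset.mem_univ i)
      rcases mul_eq_zero.mp h0 with h1 | h1
      · exact absurd h1 (hlam i s u).ne'
      rcases mul_eq_zero.mp h1 with h2 | h2
      · exact absurd h2 (hw i s).ne'
      · exact h2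
    · intro h
      rw [Finset.sum_eq_zero fun i _ => by rw [h i, mul_zero, mul_zero]]
      ring
  have hQ0 : ∀ s, Q s u0 = V s := fun s => (heq s u0).mpr hu0
  have hmem : ∀ u : ∀ j, U j, u ∈ Set.pi Set.univ M ↔ ∀ i, A i (u i) = 0 := by
    intro u
    simp only [Set.mem_pi, Set.mem_univ, true_implies]
    constructor
    · intro h i; have := h i; rw [hM i] at this; exact this
    · intro h i; rw [hM i]; exact h i
  constructor
  · intro s
    ext u
    rw [Set.mem_setOf_eq, hmem u]
    constructor
    · intro h
      have h1 := h u0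
      rw [hQ0 s] at h1
      exact (heq s u).mp (le_antisymm (hle s u) h1)
    · intro h u'
      calc Q s u' ≤ V s := hle s u'
        _ = Q s u := ((heq s u).mpr h).symm
  · intro p hp _
    have hsle : ∀ u : ∀ j, U j, ∑ s, p s * Q s u ≤ ∑ s, p s * V s := fun u =>
      Finset.sum_le_sum fun s _ => mul_le_mul_of_nonneg_left (hle s u) (hp s).le
    have hsum0 : ∑ s, p s * Q s u0 = ∑ s, p s * V s :=
      Finset.sum_congr rfl fun s _ => by rw [hQ0 s]
    ext u
    rw [Set.mem_setOf_eq, hmem u]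
    constructor
    · intro h
      have h1 := h u0
      rw [hsum0] at h1
      have h2 : ∑ s, p s * Q s u = ∑ s, p s * V s := le_antisymm (hsle u) h1
      have h3 : ∑ s, p s * (V s - Q s u) = 0 := by
        simp only [mul_sub]
        rw [Finset.sum_sub_distrib, h2, sub_self]
      have h4 : ∀ s ∈ Finset.univ, p s * (V s - Q s u) = 0 :=
        (Finset.sum_eq_zero_iff_of_nonneg fun s _ =>
          mul_nonneg (hp s).le (sub_nonneg.mpr (hle s u))).mp h3
      obtain ⟨s0⟩ := ‹Nonempty S›
      have h5 := h4 s0 (Finset.mem_univ s0)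
      rcases mul_eq_zero.mp h5 with h6 | h6
      · exact absurd h6 (hp s0).ne'
      · exact (heq s0 u).mp (by linarith)
    · intro h u'
      calc ∑ s, p s * Q s u' ≤ ∑ s, p s * V s := hsle u'
        _ = ∑ s, p s * Q s u :=
          (Finset.sum_congr rfl fun s _ => by rw [((heq s u).mpr h)]).symm
end

section
/- Let n ≥ 1, let U_1, …, U_n be finite nonempty sets with product U = ∏_i U_i. For each i let A_i : U_i → ℝ with A_i ≤ 0 and nonempty zero set M_i = {v : A_i(v) = 0}. Let A : U → ℝ satisfy A(u) ≤ 0 for all u, and A(u) = 0 if and only if u_i ∈ M_i for every i. Then there exist functions λ_i : U → ℝ with λ_i(u) > 0 for all u and all i, such that A(u) = ∑_i λ_i(u) · A_i(u_i) for every u ∈ U. -/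
/-- Realization step of the QPLEX/DuelMIX expressiveness proof: any nonpositive
joint advantage that vanishes exactly on the product of the individual greedy sets
can be written as a positively weighted sum of the individual advantages. -/
theorem stmt11 {n : ℕ} (hn : 1 ≤ n) (U : Fin n → Type*)
    [∀ i, Fintype (U i)] [∀ i, Nonempty (U i)]
    (A : ∀ i, U i → ℝ) (hA : ∀ i v, A i v ≤ 0)
    (M : ∀ i, Set (U i)) (hM : ∀ i, M i = {v : U i | A i v = 0})
    (hMne : ∀ i, (M i).Nonempty)
    (Aj : (∀ j, U j) → ℝ) (hAj0 : ∀ u, Aj u ≤ 0)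
    (hAjz : ∀ u, Aj u = 0 ↔ ∀ i, u i ∈ M i) :
    ∃ lam : Fin n → (∀ j, U j) → ℝ,
      (∀ i u, 0 < lam i u) ∧ ∀ u, Aj u = ∑ i, lam i u * A i (u i) := by
  classical
  have key : ∀ u : ∀ j, U j, ¬(∀ j, u j ∈ M j) →
      Aj u < 0 ∧ (∑ j, A j (u j)) < 0 := by
    intro u h
    have hAjneg : Aj u < 0 := lt_of_le_of_ne (hAj0 u) (fun he => h ((hAjz u).mp he))
    obtain ⟨j, hj⟩ := not_forall.mp h
    have hjlt : A j (u j) < 0 := by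
      rcases lt_or_eq_of_le (hA j (u j)) with h' | h'
      · exact h'
      · exact absurd (by rw [hM]; exact h') hj
    have h1 : -A j (u j) ≤ ∑ k, -A k (u k) :=
      Finset.single_le_sum (fun k _ => neg_nonneg.mpr (hA k (u k))) (Finset.mem_univ j)
    rw [Finset.sum_neg_distrib] at h1
    exact ⟨hAjneg, by linarith⟩
  refine ⟨fun i u => if ∀ j, u j ∈ M j then 1 else Aj u / (∑ j, A j (u j)), ?_, ?_⟩
  · intro i u
    by_cases h : ∀ j, u j ∈ M j
    · simp [h]
    · obtain ⟨h1, h2⟩ := key u h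
      simp only [h, if_false]
      exact div_pos_of_neg_of_neg h1 h2
  · intro u
    by_cases h : ∀ j, u j ∈ M j
    · have h0 : Aj u = 0 := (hAjz u).mpr h
      have : ∀ i, A i (u i) = 0 := fun i => by
        have := h i; rwa [hM] at this
      simp [h, h0, this]
    · obtain ⟨h1, h2⟩ := key u h
      simp only [h, if_false]
      rw [← Finset.mul_sum, div_mul_cancel₀ _ (ne_of_lt h2)]
end

section
/- Let n ≥ 1, let U_1, …, U_n be finite nonempty sets with product U = ∏_i U_i, let Q : U → ℝ be a joint value, and let Q_i : U_i → ℝ be individual utilities with individual advantages A_i(v) = Q_i(v) − max_{v' ∈ U_i} Q_i(v'). Then the following are equivalent: (1) the set of maximizers of Q equals the product of the sets of maximizers of the Q_i (the IGM condition); (2) there exist a constant V ∈ ℝ and functions λ_i : U → ℝ with λ_i(u) > 0 for all u and i, such that Q(u) = V + ∑_i λ_i(u) · A_i(u_i) for all u ∈ U. -/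
/-- DuelMIX expressiveness: a joint value Q satisfies IGM w.r.t. individual
utilities Qᵢ iff it can be represented as a constant baseline plus a positively
weighted sum of the individual advantages Aᵢ(v) = Qᵢ(v) − max Qᵢ. -/
theorem stmt12 {n : ℕ} (hn : 1 ≤ n) (U : Fin n → Type*)
    [∀ i, Fintype (U i)] [∀ i, Nonempty (U i)]
    (Q : (∀ i, U i) → ℝ) (Qi : ∀ i, U i → ℝ)
    (Ai : ∀ i, U i → ℝ)
    (hAi : ∀ i v, Ai i v = Qi i v - Finset.univ.sup' Finset.univ_nonempty (Qi i)) :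
    ({u : ∀ i, U i | ∀ u', Q u' ≤ Q u}
        = Set.pi Set.univ (fun i => {v : U i | ∀ v', Qi i v' ≤ Qi i v}))
      ↔
    (∃ (V : ℝ) (lam : Fin n → (∀ i, U i) → ℝ),
      (∀ i u, 0 < lam i u) ∧ ∀ u, Q u = V + ∑ i, lam i u * Ai i (u i)) := by
  classical
  have hAle : ∀ i (v : U i), Ai i v ≤ 0 := by
    intro i v
    rw [hAi]
    simp [Finset.le_sup' (Qi i) (Finset.mem_univ v)]
  have hAzero : ∀ i (v : U i), Ai i v = 0 ↔ (∀ v', Qi i v' ≤ Qi i v) := by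
    intro i v
    rw [hAi, sub_eq_zero]
    constructor
    · intro h v'
      rw [h]; exact Finset.le_sup' (Qi i) (Finset.mem_univ v')
    · intro h
      exact le_antisymm (Finset.le_sup' _ (Finset.mem_univ v))
        (Finset.sup'_le _ _ fun v' _ => h v')
  obtain ⟨ustar, hustar⟩ : ∃ u : ∀ i, U i, ∀ i v', Qi i v' ≤ Qi i (u i) := by
    have h1 : ∀ i, ∃ v : U i, ∀ v', Qi i v' ≤ Qi i v := by
      intro i
      obtain ⟨v, _, hv⟩ := Finset.exists_max_image (Finset.univ : Finset (U i)) (Qi i)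
        Finset.univ_nonempty
      exact ⟨v, fun v' => hv v' (Finset.mem_univ v')⟩
    choose f hf using h1
    exact ⟨f, hf⟩
  constructor
  · intro h
    obtain ⟨umax, _, humax⟩ := Finset.exists_max_image (Finset.univ : Finset (∀ i, U i)) Q
      Finset.univ_nonempty
    have humax' : ∀ u', Q u' ≤ Q umax := fun u' => humax u' (Finset.mem_univ u')
    set M := Q umax with hM
    have key : ∀ u : ∀ i, U i, ¬ (∀ v', Q v' ≤ Q u) →
        Q u < M ∧ (∑ j, Ai j (u j)) < 0 := by
      intro u hu
      have hQlt : Q u < M := by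
        push_neg at hu
        obtain ⟨u', hu'⟩ := hu
        exact lt_of_lt_of_le hu' (humax' u')
      refine ⟨hQlt, ?_⟩
      have hnot : u ∉ Set.pi Set.univ (fun i => {v : U i | ∀ v', Qi i v' ≤ Qi i v}) := by
        rw [← h]
        intro hmem
        exact absurd hQlt (not_lt.mpr (hmem umax))
      rw [Set.mem_univ_pi] at hnot
      push_neg at hnot
      obtain ⟨i, hi⟩ := hnot
      have hAi_ne : Ai i (u i) ≠ 0 := fun hz => hi ((hAzero i (u i)).mp hz)
      have hAi_lt : Ai i (u i) < 0 := lt_of_le_of_ne (hAle i (u i)) hAi_ne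
      calc (∑ j, Ai j (u j)) < ∑ _j : Fin n, (0:ℝ) :=
            Finset.sum_lt_sum (fun j _ => hAle j (u j)) ⟨i, Finset.mem_univ i, hAi_lt⟩
        _ = 0 := by simp
    refine ⟨M, fun i u => if ∀ v', Q v' ≤ Q u then 1 else (Q u - M) / (∑ j, Ai j (u j)),
      ?_, ?_⟩
    · intro i u
      by_cases hu : ∀ v', Q v' ≤ Q u
      · simp [hu]
      · obtain ⟨h1, h2⟩ := key u hu
        simp only [hu, if_false]
        exact div_pos_of_neg_of_neg (by linarith) h2
    · intro u
      by_cases hu : ∀ v', Q v' ≤ Q u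
      · have hQu : Q u = M := le_antisymm (humax' u) (hu umax)
        have hmem : u ∈ Set.pi Set.univ (fun i => {v : U i | ∀ v', Qi i v' ≤ Qi i v}) := by
          rw [← h]; exact hu
        rw [Set.mem_univ_pi] at hmem
        have : ∀ i : Fin n, Ai i (u i) = 0 := fun i => (hAzero i (u i)).mpr (hmem i)
        simp [hu, this, hQu]
      · obtain ⟨h1, h2⟩ := key u hu
        simp only [hu, if_false]
        rw [← Finset.mul_sum, div_mul_cancel₀ _ (ne_of_lt h2)]
        ring
  · rintro ⟨V, lam, hpos, heq⟩
    have hle : ∀ u, Q u ≤ V := by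
      intro u
      rw [heq u]
      have : ∑ i, lam i u * Ai i (u i) ≤ 0 :=
        Finset.sum_nonpos fun i _ =>
          mul_nonpos_of_nonneg_of_nonpos (le_of_lt (hpos i u)) (hAle i (u i))
      linarith
    have hVstar : Q ustar = V := by
      rw [heq ustar]
      have : ∀ i : Fin n, Ai i (ustar i) = 0 := fun i => (hAzero i (ustar i)).mpr (hustar i)
      simp [this]
    ext u
    simp only [Set.mem_setOf_eq, Set.mem_univ_pi]
    constructor
    · intro hu i
      have hQu : Q u = V := le_antisymm (hle u) (hVstar ▸ hu ustar)
      have hsum : ∑ i, lam i u * Ai i (u i) = 0 := by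
        have := heq u; linarith
      have hzero : ∀ i ∈ Finset.univ, lam i u * Ai i (u i) = 0 :=
        (Finset.sum_eq_zero_iff_of_nonpos fun i _ =>
          mul_nonpos_of_nonneg_of_nonpos (le_of_lt (hpos i u)) (hAle i (u i))).mp hsum
      have : Ai i (u i) = 0 := by
        have h0 := hzero i (Finset.mem_univ i)
        rcases mul_eq_zero.mp h0 with h | h
        · exact absurd h (ne_of_gt (hpos i u))
        · exact h
      exact (hAzero i (u i)).mp this
    · intro hu u'
      have : ∀ i : Fin n, Ai i (u i) = 0 := fun i => (hAzero i (u i)).mpr (hu i)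
      have hQu : Q u = V := by rw [heq u]; simp [this]
      rw [hQu]; exact hle u'
end

section
/- Let n ≥ 1, let U_1, …, U_n be finite nonempty sets with product U = ∏_i U_i. For each i let A_i : U_i → ℝ with A_i ≤ 0 and nonempty zero set M_i = {v : A_i(v) = 0}, and let w_i > 0 be a positive real. Define the transformed advantages A_i'(v) = w_i · A_i(v). Then for each i, A_i' ≤ 0 and its zero set equals M_i; moreover, for any λ_i : U → ℝ with λ_i(u) > 0, the set of maximizers of u ↦ ∑_i λ_i(u) · A_i'(u_i) equals ∏_i M_i. -/
/-- Positive, per-agent transformation weights preserve nonpositivity and the greedy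
sets of the individual advantages, and positively weighted attention mixing of the
transformed advantages attains its maximum exactly on the product of the greedy sets. -/
theorem stmt14 {n : ℕ} (hn : 1 ≤ n) (U : Fin n → Type*)
    [∀ i, Fintype (U i)] [∀ i, Nonempty (U i)]
    (A : ∀ i, U i → ℝ) (hA : ∀ i v, A i v ≤ 0)
    (M : ∀ i, Set (U i)) (hM : ∀ i, M i = {v : U i | A i v = 0})
    (hMne : ∀ i, (M i).Nonempty)
    (w : Fin n → ℝ) (hw : ∀ i, 0 < w i)
    (A' : ∀ i, U i → ℝ) (hA' : ∀ i v, A' i v = w i * A i v) :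
    (∀ i v, A' i v ≤ 0) ∧
    (∀ i, {v : U i | A' i v = 0} = M i) ∧
    (∀ lam : Fin n → (∀ j, U j) → ℝ, (∀ i u, 0 < lam i u) →
      {u : ∀ j, U j |
          ∀ u', (∑ i, lam i u' * A' i (u' i)) ≤ ∑ i, lam i u * A' i (u i)}
        = Set.pi Set.univ M) := by
  have hA'le : ∀ i v, A' i v ≤ 0 := by
    intro i v
    rw [hA' i v]
    exact mul_nonpos_of_nonneg_of_nonpos (hw i).le (hA i v)
  have hzero : ∀ i v, A' i v = 0 ↔ A i v = 0 := by
    intro i v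
    rw [hA' i v]
    constructor
    · intro h
      rcases mul_eq_zero.mp h with h | h
      · exact absurd h (hw i).ne'
      · exact h
    · intro h; rw [h, mul_zero]
  refine ⟨hA'le, ?_, ?_⟩
  · intro i
    rw [hM i]
    ext v
    simp [hzero]
  · intro lam hlam
    ext u
    simp only [Set.mem_setOf_eq, Set.mem_pi, Set.mem_univ, forall_true_left]
    have key : ∀ u' : ∀ j, U j, (∑ i, lam i u' * A' i (u' i)) ≤ 0 := by
      intro u'
      apply Finset.sum_nonpos
      intro i _
      exact mul_nonpos_of_nonneg_of_nonpos (hlam i u').le (hA'le i (u' i))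
    constructor
    · intro hmax
      -- pick u* in product of M i
      choose v hv using hMne
      have hvz : ∀ i, A' i (v i) = 0 := fun i => (hzero i (v i)).mpr
        (by have := hv i; rwa [hM i] at this)
      have hs : (∑ i, lam i v * A' i (v i)) = 0 := by
        apply Finset.sum_eq_zero; intro i _; rw [hvz i, mul_zero]
      have h0 : (0 : ℝ) ≤ ∑ i, lam i u * A' i (u i) := by
        rw [← hs]; exact hmax v
      have heq : (∑ i, lam i u * A' i (u i)) = 0 := le_antisymm (key u) h0
      have hterm : ∀ i ∈ Finset.univ, lam i u * A' i (u i) = 0 := by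
        apply (Finset.sum_eq_zero_iff_of_nonpos ?_).mp heq
        intro i _
        exact mul_nonpos_of_nonneg_of_nonpos (hlam i u).le (hA'le i (u i))
      intro i
      have := hterm i (Finset.mem_univ i)
      rcases mul_eq_zero.mp this with h | h
      · exact absurd h (hlam i u).ne'
      · rw [hM i]; exact (hzero i (u i)).mp h
    · intro hu u'
      have : (∑ i, lam i u * A' i (u i)) = 0 := by
        apply Finset.sum_eq_zero; intro i _
        have := hu i; rw [hM i] at this
        rw [(hzero i (u i)).mpr this, mul_zero]
      rw [this]; exact key u'
end
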